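/- Let ν be a measure on (0,∞) with ∫_0^∞ min(y,1) ν(dy) < ∞ and ν((0,∞)) = ∞, and define ψ(s) = ∫_0^∞ (1 − e^{−sy}) ν(dy) for s > 0. Then the function R(s) := ψ(s) − s ψ'(s) satisfies R(s) = ∫_0^∞ (1 − e^{−sy} − sy e^{−sy}) ν(dy); R is continuous and strictly increasing on (0,∞), lim_{s→0+} R(s) = 0, and lim_{s→∞} R(s) = ν((0,∞)) = ∞. -/

import Mathlib

open MeasureTheory Filter Topology Set

/-!
With `h(u) = 1 - (1 + u) e^{-u}` (`rKernel`) one has `R(s) = ∫ h(s y) ν(dy)`, which is what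
differentiating `ψ` under the integral sign gives. Since `0 ≤ h(u) ≤ min(u, 1)` and
`min(s y, 1) ≤ max(s, 1) min(y, 1)`, all integrands are dominated by multiples of `min(y, 1)`,
so dominated convergence gives continuity of `R` on `[0, ∞)` with `R(0) = 0`. As
`h'(u) = u e^{-u} > 0`, `R` is strictly increasing, and since `h(u) ↑ 1`, monotone convergence
gives `R(s) → ν((0, ∞)) = ∞`.
-/

noncomputable def rKernel (u : ℝ) : ℝ := 1 - Real.exp (-u) - u * Real.exp (-u)

lemma one_sub_exp_neg_le_min (u : ℝ) : 1 - Real.exp (-u) ≤ min u 1 :=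
  le_min (by linarith [Real.add_one_le_exp (-u)]) (by linarith [Real.exp_pos (-u)])

lemma min_mul_le_max_mul_min (c : ℝ) {y : ℝ} (hy : 0 ≤ y) :
    min (c * y) 1 ≤ max c 1 * min y 1 := by
  rcases le_total y 1 with h | h
  · rw [min_eq_left h]
    exact (min_le_left _ _).trans (mul_le_mul_of_nonneg_right (le_max_left _ _) hy)
  · rw [min_eq_right h, mul_one]
    exact (min_le_right _ _).trans (le_max_right _ _)

lemma mul_exp_neg_mul_le {t y : ℝ} (ht : 0 < t) (hy : 0 ≤ y) :
    y * Real.exp (-(t * y)) ≤ max t⁻¹ 1 * min y 1 := by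
  rcases le_total y 1 with h | h
  · have he : Real.exp (-(t * y)) ≤ 1 := Real.exp_le_one_iff.2 (by nlinarith)
    rw [min_eq_left h]
    calc y * Real.exp (-(t * y)) ≤ y := mul_le_of_le_one_right hy he
      _ ≤ max t⁻¹ 1 * y := le_mul_of_one_le_left hy (le_max_right _ _)
  · have hty : t * y * Real.exp (-(t * y)) ≤ 1 :=
      (Real.mul_exp_neg_le_exp_neg_one _).trans (Real.exp_le_one_iff.2 (by norm_num))
    rw [min_eq_right h, mul_one]
    calc y * Real.exp (-(t * y)) = t⁻¹ * (t * y * Real.exp (-(t * y))) := by field_simp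
      _ ≤ t⁻¹ := mul_le_of_le_one_right (inv_nonneg.2 ht.le) hty
      _ ≤ max t⁻¹ 1 := le_max_left _ _

lemma rKernel_zero : rKernel 0 = 0 := by simp [rKernel]

@[fun_prop]
lemma continuous_rKernel : Continuous rKernel := by unfold rKernel; fun_prop

@[fun_prop]
lemma measurable_rKernel : Measurable rKernel := continuous_rKernel.measurable

lemma hasDerivAt_rKernel (u : ℝ) : HasDerivAt rKernel (u * Real.exp (-u)) u := by
  have he : HasDerivAt (fun u => Real.exp (-u)) (-Real.exp (-u)) u := by
    simpa using (hasDerivAt_neg u).exp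
  exact (((hasDerivAt_const u 1).sub he).sub ((hasDerivAt_id' u).mul he)).congr_deriv (by ring)

lemma rKernel_strictMonoOn : StrictMonoOn rKernel (Ici 0) := by
  refine strictMonoOn_of_deriv_pos (convex_Ici 0) continuous_rKernel.continuousOn fun u hu => ?_
  rw [interior_Ici] at hu
  rw [(hasDerivAt_rKernel u).deriv]
  exact mul_pos hu (Real.exp_pos _)

lemma rKernel_nonneg {u : ℝ} (hu : 0 ≤ u) : 0 ≤ rKernel u :=
  rKernel_zero ▸ rKernel_strictMonoOn.monotoneOn self_mem_Ici hu hu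

lemma rKernel_le_min {u : ℝ} (hu : 0 ≤ u) : rKernel u ≤ min u 1 :=
  (sub_le_self _ (mul_nonneg hu (Real.exp_pos _).le)).trans (one_sub_exp_neg_le_min u)

lemma tendsto_rKernel_atTop : Tendsto rKernel atTop (𝓝 1) := by
  unfold rKernel
  have h := (tendsto_const_nhds (x := (1 : ℝ))).sub Real.tendsto_exp_neg_atTop_nhds_zero
    |>.sub (by simpa using Real.tendsto_pow_mul_exp_neg_atTop_nhds_zero 1)
  simpa using h

lemma MonotoneOn.tendsto_atTop_of_tendsto_natCast {f : ℝ → ℝ} {a : ℝ}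
    (hf : MonotoneOn f (Ici a)) (h : Tendsto (fun n : ℕ => f n) atTop atTop) :
    Tendsto f atTop atTop := by
  refine tendsto_atTop_atTop.2 fun b => ?_
  obtain ⟨n, han, hbn⟩ :=
    ((tendsto_natCast_atTop_atTop.eventually_ge_atTop a).and (h.eventually_ge_atTop b)).exists
  exact ⟨n, fun x hx => hbn.trans (hf han (han.trans hx) hx)⟩

lemma norm_one_sub_exp_neg_mul_le {s y : ℝ} (hs : 0 ≤ s) (hy : 0 ≤ y) :
    ‖1 - Real.exp (-(s * y))‖ ≤ max s 1 * min y 1 := by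
  have hsy : 0 ≤ s * y := mul_nonneg hs hy
  rw [Real.norm_of_nonneg (sub_nonneg.2 (Real.exp_le_one_iff.2 (neg_nonpos.2 hsy)))]
  exact (one_sub_exp_neg_le_min _).trans (min_mul_le_max_mul_min s hy)

lemma norm_rKernel_mul_le {s y : ℝ} (hs : 0 ≤ s) (hy : 0 ≤ y) :
    ‖rKernel (s * y)‖ ≤ max s 1 * min y 1 := by
  have hsy : 0 ≤ s * y := mul_nonneg hs hy
  rw [Real.norm_of_nonneg (rKernel_nonneg hsy)]
  exact (rKernel_le_min hsy).trans (min_mul_le_max_mul_min s hy)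

lemma hasDerivAt_one_sub_exp_neg_mul (s y : ℝ) :
    HasDerivAt (fun s => 1 - Real.exp (-(s * y))) (y * Real.exp (-(s * y))) s :=
  ((hasDerivAt_mul_const y).neg.exp.const_sub 1).congr_deriv (by simp [mul_comm])

noncomputable def laplaceExponent (ν : Measure ℝ) (s : ℝ) : ℝ :=
  ∫ y in Ioi 0, (1 - Real.exp (-(s * y))) ∂ν

/-- The function `R = ψ - s ψ'` of the statement, in its integral form. -/
noncomputable def rFunction (ν : Measure ℝ) (s : ℝ) : ℝ :=
  ∫ y in Ioi 0, rKernel (s * y) ∂ν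

section

variable {ν : Measure ℝ}

lemma integrableOn_min_one_of_lintegral_lt_top
    (hν : ∫⁻ y in Ioi 0, ENNReal.ofReal (min y 1) ∂ν < ⊤) :
    IntegrableOn (fun y => min y 1) (Ioi 0) ν := by
  refine ⟨by fun_prop, (hasFiniteIntegral_iff_ofReal ?_).2 hν⟩
  exact ae_restrict_of_forall_mem measurableSet_Ioi fun y hy => le_min (le_of_lt hy) zero_le_one

lemma integrableOn_of_norm_le_mul_min_one (hν : IntegrableOn (fun y => min y 1) (Ioi 0) ν)
    {f : ℝ → ℝ} (hf : AEStronglyMeasurable f (ν.restrict (Ioi 0))) (C : ℝ)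
    (hfC : ∀ y, 0 < y → ‖f y‖ ≤ C * min y 1) : IntegrableOn f (Ioi 0) ν :=
  (hν.const_mul C).mono' hf ((ae_restrict_iff' measurableSet_Ioi).2 (.of_forall hfC))

lemma integrableOn_one_sub_exp_neg_mul (hν : IntegrableOn (fun y => min y 1) (Ioi 0) ν)
    {s : ℝ} (hs : 0 ≤ s) : IntegrableOn (fun y => 1 - Real.exp (-(s * y))) (Ioi 0) ν :=
  integrableOn_of_norm_le_mul_min_one hν (by fun_prop) _ fun _ hy =>
    norm_one_sub_exp_neg_mul_le hs hy.le

lemma integrableOn_mul_exp_neg_mul (hν : IntegrableOn (fun y => min y 1) (Ioi 0) ν)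
    {s : ℝ} (hs : 0 < s) : IntegrableOn (fun y => y * Real.exp (-(s * y))) (Ioi 0) ν :=
  integrableOn_of_norm_le_mul_min_one hν (by fun_prop) _ fun y hy => by
    rw [Real.norm_of_nonneg (mul_nonneg hy.le (Real.exp_pos _).le)]
    exact mul_exp_neg_mul_le hs hy.le

lemma integrableOn_rKernel_mul (hν : IntegrableOn (fun y => min y 1) (Ioi 0) ν)
    {s : ℝ} (hs : 0 ≤ s) : IntegrableOn (fun y => rKernel (s * y)) (Ioi 0) ν :=
  integrableOn_of_norm_le_mul_min_one hν (by fun_prop) _ fun _ hy => norm_rKernel_mul_le hs hy.le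

lemma hasDerivAt_laplaceExponent (hν : IntegrableOn (fun y => min y 1) (Ioi 0) ν)
    {s : ℝ} (hs : 0 < s) :
    HasDerivAt (laplaceExponent ν) (∫ y in Ioi 0, y * Real.exp (-(s * y)) ∂ν) s := by
  have hbound : ∀ᵐ y ∂ν.restrict (Ioi 0), ∀ x ∈ Metric.ball s (s / 2),
      ‖y * Real.exp (-(x * y))‖ ≤ max (s / 2)⁻¹ 1 * min y 1 := by
    refine (ae_restrict_iff' measurableSet_Ioi).2 (.of_forall fun y (hy : 0 < y) x hx => ?_)
    have hx : s / 2 < x := by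
      rw [Metric.mem_ball, Real.dist_eq, abs_lt] at hx
      linarith
    rw [Real.norm_of_nonneg (mul_nonneg hy.le (Real.exp_pos _).le)]
    calc y * Real.exp (-(x * y)) ≤ y * Real.exp (-(s / 2 * y)) := by gcongr
      _ ≤ max (s / 2)⁻¹ 1 * min y 1 := mul_exp_neg_mul_le (half_pos hs) hy.le
  exact (hasDerivAt_integral_of_dominated_loc_of_deriv_le (μ := ν.restrict (Ioi 0))
    (F := fun x y => 1 - Real.exp (-(x * y))) (Metric.ball_mem_nhds s (half_pos hs))
    (.of_forall fun _ => by fun_prop) (integrableOn_one_sub_exp_neg_mul hν hs.le) (by fun_prop)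
    hbound (hν.const_mul _) (.of_forall fun y x _ => hasDerivAt_one_sub_exp_neg_mul x y)).2

lemma laplaceExponent_sub_mul_deriv (hν : IntegrableOn (fun y => min y 1) (Ioi 0) ν)
    {s : ℝ} (hs : 0 < s) :
    laplaceExponent ν s - s * deriv (laplaceExponent ν) s = rFunction ν s := by
  rw [(hasDerivAt_laplaceExponent hν hs).deriv, ← integral_const_mul, laplaceExponent,
    ← integral_sub (integrableOn_one_sub_exp_neg_mul hν hs.le)
      ((integrableOn_mul_exp_neg_mul hν hs).const_mul s)]
  congr 1 with y
  simp only [rKernel]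
  ring

lemma continuousOn_rFunction (hν : IntegrableOn (fun y => min y 1) (Ioi 0) ν) :
    ContinuousOn (rFunction ν) (Ici 0) := by
  intro s _
  have hbound : ∀ᶠ x in 𝓝[Ici 0] s, ∀ᵐ y ∂ν.restrict (Ioi 0),
      ‖rKernel (x * y)‖ ≤ max (s + 1) 1 * min y 1 := by
    filter_upwards [self_mem_nhdsWithin, nhdsWithin_le_nhds (Iio_mem_nhds (lt_add_one s))]
      with x (hx : 0 ≤ x) (hxs : x < s + 1)
    refine (ae_restrict_iff' measurableSet_Ioi).2 (.of_forall fun y (hy : 0 < y) => ?_)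
    exact (norm_rKernel_mul_le hx hy.le).trans (by gcongr)
  exact continuousWithinAt_of_dominated (.of_forall fun _ => by fun_prop) hbound
    (hν.const_mul _) (.of_forall fun _ => by fun_prop)

lemma rFunction_zero : rFunction ν 0 = 0 := by simp [rFunction, rKernel_zero]

lemma strictMonoOn_rFunction (hν : IntegrableOn (fun y => min y 1) (Ioi 0) ν)
    (hν₀ : ν (Ioi 0) ≠ 0) : StrictMonoOn (rFunction ν) (Ici 0) := by
  intro a (ha : 0 ≤ a) b (hb : 0 ≤ b) hab
  have hlt : ∀ y ∈ Ioi (0 : ℝ), rKernel (a * y) < rKernel (b * y) := fun y (hy : 0 < y) =>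
    rKernel_strictMonoOn (mul_nonneg ha hy.le) (mul_nonneg hb hy.le)
      (mul_lt_mul_of_pos_right hab hy)
  have hsupp : Ioi 0 ⊆ Function.support fun y => rKernel (b * y) - rKernel (a * y) :=
    fun y hy => (sub_pos.2 (hlt y hy)).ne'
  have hpos : 0 < ∫ y in Ioi 0, (rKernel (b * y) - rKernel (a * y)) ∂ν := by
    rw [setIntegral_pos_iff_support_of_nonneg_ae
      (ae_restrict_of_forall_mem measurableSet_Ioi fun y hy => (sub_pos.2 (hlt y hy)).le)
      ((integrableOn_rKernel_mul hν hb).sub (integrableOn_rKernel_mul hν ha)),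
      inter_eq_right.2 hsupp]
    exact pos_iff_ne_zero.2 hν₀
  rw [integral_sub (integrableOn_rKernel_mul hν hb) (integrableOn_rKernel_mul hν ha)] at hpos
  exact sub_pos.1 hpos

lemma tendsto_rFunction_atTop (hν : IntegrableOn (fun y => min y 1) (Ioi 0) ν)
    (hν_top : ν (Ioi 0) = ⊤) : Tendsto (rFunction ν) atTop atTop := by
  refine (strictMonoOn_rFunction hν (by simp [hν_top])).monotoneOn
    |>.tendsto_atTop_of_tendsto_natCast ?_
  have hofReal : ∀ n : ℕ, ENNReal.ofReal (rFunction ν n)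
      = ∫⁻ y in Ioi 0, ENNReal.ofReal (rKernel (n * y)) ∂ν := fun n =>
    ofReal_integral_eq_lintegral_ofReal (integrableOn_rKernel_mul hν n.cast_nonneg)
      (ae_restrict_of_forall_mem measurableSet_Ioi fun y (hy : 0 < y) =>
        rKernel_nonneg (mul_nonneg n.cast_nonneg hy.le))
  have hmct : Tendsto (fun n : ℕ => ∫⁻ y in Ioi 0, ENNReal.ofReal (rKernel (n * y)) ∂ν)
      atTop (𝓝 (∫⁻ y in Ioi 0, 1 ∂ν)) := by
    refine lintegral_tendsto_of_tendsto_of_monotone (fun _ => by fun_prop)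
      (ae_restrict_of_forall_mem measurableSet_Ioi fun y (hy : 0 < y) => ?_)
      (ae_restrict_of_forall_mem measurableSet_Ioi fun y (hy : 0 < y) => ?_)
    · exact fun m n hmn => ENNReal.ofReal_le_ofReal <| rKernel_strictMonoOn.monotoneOn
        (mul_nonneg m.cast_nonneg hy.le) (mul_nonneg n.cast_nonneg hy.le)
        (by gcongr)
    · simpa using ENNReal.tendsto_ofReal
        (tendsto_rKernel_atTop.comp (tendsto_natCast_atTop_atTop.atTop_mul_const hy))
  rw [setLIntegral_one, hν_top] at hmct
  rw [← ENNReal.tendsto_ofReal_nhds_top]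
  simpa only [hofReal] using hmct

end

/-- Let `ν` be a measure on `(0,∞)` with `∫ min(y,1) ν(dy) < ∞` and
`ν((0,∞)) = ∞`, and let `ψ s = ∫ (1 - exp (-s y)) ν(dy)`.  Then
`R s := ψ s - s ψ' s = ∫ (1 - exp (-s y) - s y exp (-s y)) ν(dy)`; `R` is continuous and
strictly increasing on `(0,∞)`, `R s → 0` as `s → 0+`, and `R s → ν((0,∞)) = ∞` as
`s → ∞`. -/
theorem laplaceExponent_R_properties
    (ν : Measure ℝ) (ψ : ℝ → ℝ)
    (hν : ∫⁻ y in Set.Ioi (0 : ℝ), ENNReal.ofReal (min y 1) ∂ν < ⊤)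
    (hνinf : ν (Set.Ioi (0 : ℝ)) = ⊤)
    (hψ : ∀ s : ℝ, ψ s = ∫ y in Set.Ioi (0 : ℝ), (1 - Real.exp (-(s * y))) ∂ν) :
    (∀ s, 0 < s → ψ s - s * deriv ψ s
      = ∫ y in Set.Ioi (0 : ℝ),
          (1 - Real.exp (-(s * y)) - s * y * Real.exp (-(s * y))) ∂ν) ∧
    ContinuousOn (fun s => ψ s - s * deriv ψ s) (Set.Ioi 0) ∧
    StrictMonoOn (fun s => ψ s - s * deriv ψ s) (Set.Ioi 0) ∧
    Tendsto (fun s => ψ s - s * deriv ψ s) (𝓝[>] (0 : ℝ)) (𝓝 0) ∧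
    Tendsto (fun s => ψ s - s * deriv ψ s) atTop atTop := by
  obtain rfl : ψ = laplaceExponent ν := funext hψ
  have hmin := integrableOn_min_one_of_lintegral_lt_top hν
  have hR : EqOn (fun s => laplaceExponent ν s - s * deriv (laplaceExponent ν) s)
      (rFunction ν) (Ioi 0) := fun _ hs => laplaceExponent_sub_mul_deriv hmin hs
  have hcont := continuousOn_rFunction hmin
  have hmono := strictMonoOn_rFunction hmin (by simp [hνinf])
  refine ⟨fun _ hs => hR hs, (hcont.mono Ioi_subset_Ici_self).congr hR,
    (hmono.mono Ioi_subset_Ici_self).congr hR.symm, ?_, ?_⟩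
  · have h0 := (hcont 0 self_mem_Ici).tendsto.mono_left (nhdsWithin_mono _ Ioi_subset_Ici_self)
    rw [rFunction_zero] at h0
    exact h0.congr' hR.eventuallyEq_nhdsWithin.symm
  · exact (tendsto_rFunction_atTop hmin hνinf).congr'
      ((eventually_gt_atTop 0).mono fun _ hs => (hR hs).symm)
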